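/- arXiv:1701.06672 — 3 statements merged into one kernel-verified Lean document; each statement's English description precedes it below -/
import Mathlib

section
/- The rings R₁ = ℤ₄[x]/⟨x²+2⟩ and R₂ = ℤ₄[x]/⟨x²+2x+2⟩ are not isomorphic as rings, even though both have 16 elements and additive groups isomorphic to ℤ₄ ⊕ ℤ₄. -/
/-!
Both rings are quadratic algebras over `ℤ₄`: `R₁ ≅ ℤ₄[ω]` with `ω² = -2` and `R₂ ≅ ℤ₄[ω]` with
`ω² = -2 - 2ω`, so each is free of rank two over `ℤ₄`. In `R₁` the element `2 = -2 = ω²` is a square.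
In `R₂`, `(x + yω)² = (x² - 2y²) + (2xy - 2y²)ω`; the real part equals `2` only if `x` is even
and `y` odd, and then the `ω`-part `2y(x - y)` is `2 ≠ 0`. So `2` is not a square in `R₂`, and a ring
isomorphism would carry squares to squares and `2` to `2`.
-/

open Polynomial

namespace QuadraticAlgebra

variable {R : Type*}

def addEquivProd [Add R] (a b : R) : QuadraticAlgebra R a b ≃+ R × R :=
  { equivProd a b with map_add' _ _ := rfl }

theorem natCard_eq (a b : R) : Nat.card (QuadraticAlgebra R a b) = Nat.card R ^ 2 := by
  rw [Nat.card_congr (equivProd a b), Nat.card_prod, sq]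

variable [CommRing R]

theorem aeval_omega (a b : R) :
    aeval (ω : QuadraticAlgebra R a b) (X ^ 2 - C b * X - C a) = 0 := by
  simp [sq, omega_mul_omega_eq_add, Algebra.smul_def]

end QuadraticAlgebra

open QuadraticAlgebra

namespace AdjoinRoot

variable {R : Type*} [CommRing R]

theorem root_mul_root_quadratic (a b : R) :
    root (X ^ 2 - C b * X - C a) * root (X ^ 2 - C b * X - C a) =
      a • 1 + b • root (X ^ 2 - C b * X - C a) := by
  have h := aeval_eq (f := X ^ 2 - C b * X - C a) (X ^ 2 - C b * X - C a)
  rw [mk_self] at h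
  simp only [map_sub, map_pow, aeval_X, map_mul, aeval_C] at h
  simp only [Algebra.smul_def, mul_one]
  linear_combination h

noncomputable def algEquivQuadraticAlgebra (a b : R) :
    AdjoinRoot (X ^ 2 - C b * X - C a) ≃ₐ[R] QuadraticAlgebra R a b :=
  AlgEquiv.ofAlgHom
    (liftAlgHom _ (Algebra.ofId R _) ω (by simpa [aeval_def] using aeval_omega a b))
    (QuadraticAlgebra.lift ⟨root _, root_mul_root_quadratic a b⟩)
    (QuadraticAlgebra.algHom_ext (by simp)) (algHom_ext (by simp))

end AdjoinRoot

noncomputable def quotientSpanEquivQuadraticAlgebra {R : Type*} [CommRing R] {f : R[X]} {a b : R}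
    (hf : f = X ^ 2 - C b * X - C a) : R[X] ⧸ Ideal.span {f} ≃+* QuadraticAlgebra R a b :=
  (Ideal.quotEquivOfEq (by rw [hf])).trans (AdjoinRoot.algEquivQuadraticAlgebra a b).toRingEquiv

theorem isSquare_two_quadraticAlgebra_zmod_four : IsSquare (2 : QuadraticAlgebra (ZMod 4) (-2) 0) :=
  ⟨ω, by ext <;> simp; decide⟩

theorem not_isSquare_two_quadraticAlgebra_zmod_four :
    ¬IsSquare (2 : QuadraticAlgebra (ZMod 4) (-2) (-2)) := by
  rintro ⟨⟨x, y⟩, h⟩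
  have hre := congrArg re h
  have him := congrArg im h
  simp only [re_mul, im_mul, re_ofNat, im_ofNat] at hre him
  revert x y
  decide

theorem R1_R2_not_isomorphic :
    letI R1 := (ZMod 4)[X] ⧸ Ideal.span {(X ^ 2 + 2 : (ZMod 4)[X])}
    letI R2 := (ZMod 4)[X] ⧸ Ideal.span {(X ^ 2 + 2 * X + 2 : (ZMod 4)[X])}
    IsEmpty (R1 ≃+* R2) ∧
    Nat.card R1 = 16 ∧ Nat.card R2 = 16 ∧
    Nonempty (R1 ≃+ (ZMod 4 × ZMod 4)) ∧ Nonempty (R2 ≃+ (ZMod 4 × ZMod 4)) := by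
  have e₁ : (ZMod 4)[X] ⧸ Ideal.span {(X ^ 2 + 2 : (ZMod 4)[X])} ≃+*
      QuadraticAlgebra (ZMod 4) (-2) 0 :=
    quotientSpanEquivQuadraticAlgebra (by simp [Polynomial.C_ofNat])
  have e₂ : (ZMod 4)[X] ⧸ Ideal.span {(X ^ 2 + 2 * X + 2 : (ZMod 4)[X])} ≃+*
      QuadraticAlgebra (ZMod 4) (-2) (-2) :=
    quotientSpanEquivQuadraticAlgebra (by simp [Polynomial.C_ofNat])
  refine ⟨⟨fun e => not_isSquare_two_quadraticAlgebra_zmod_four ?_⟩, ?_, ?_,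
    ⟨e₁.toAddEquiv.trans (addEquivProd _ _)⟩, ⟨e₂.toAddEquiv.trans (addEquivProd _ _)⟩⟩
  · simpa only [map_ofNat] using
      isSquare_two_quadraticAlgebra_zmod_four.map (e₁.symm.trans (e.trans e₂))
  · simp [Nat.card_congr e₁.toEquiv, natCard_eq]
  · simp [Nat.card_congr e₂.toEquiv, natCard_eq]
end

section
/- The ring R = ℤ₄[x]/⟨x²+2, 2x⟩ is not a free module over ℤ₄. -/
open Polynomial

/-- In a free module over `ZMod 4`, any element killed by `2` is divisible by `2`. -/
theorem free_two_smul_aux {M : Type*} [AddCommGroup M] [Module (ZMod 4) M]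
    [Module.Free (ZMod 4) M] (m : M) (h : (2 : ZMod 4) • m = 0) :
    ∃ m' : M, m = (2 : ZMod 4) • m' := by
  classical
  let b := Module.Free.chooseBasis (ZMod 4) M
  let c := b.repr m
  have hc : ∀ i, (2 : ZMod 4) * c i = 0 := by
    intro i
    have := congrArg (fun x => b.repr x i) h
    simpa [c, smul_eq_mul] using this
  have hf : ∀ a : ZMod 4, 2 * a = 0 → 2 * (if a = 2 then (1 : ZMod 4) else 0) = a := by
    decide
  let d : _ →₀ ZMod 4 := c.mapRange (fun a => if a = 2 then 1 else 0) (by decide)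
  refine ⟨b.repr.symm d, ?_⟩
  have hd : (2 : ZMod 4) • d = c := by
    ext i
    simp only [Finsupp.smul_apply, Finsupp.mapRange_apply, smul_eq_mul, d]
    exact hf _ (hc i)
  calc m = b.repr.symm c := (b.repr.symm_apply_apply m).symm
    _ = b.repr.symm ((2 : ZMod 4) • d) := by rw [hd]
    _ = (2 : ZMod 4) • b.repr.symm d := map_smul _ _ _

theorem R_not_free_over_Z4 :
    ¬ Module.Free (ZMod 4)
      ((ZMod 4)[X] ⧸ Ideal.span {(X ^ 2 + 2 : (ZMod 4)[X]), (2 * X : (ZMod 4)[X])}) := by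
  intro hfree
  set I : Ideal (ZMod 4)[X] :=
    Ideal.span {(X ^ 2 + 2 : (ZMod 4)[X]), (2 * X : (ZMod 4)[X])} with hI
  -- a ring hom to the dual numbers over `ZMod 2`, sending `X` to `ε`
  let f : ZMod 4 →+* DualNumber (ZMod 2) :=
    (algebraMap (ZMod 2) (DualNumber (ZMod 2))).comp
      (ZMod.castHom (by norm_num : (2 : ℕ) ∣ 4) (ZMod 2))
  let φ : (ZMod 4)[X] →+* DualNumber (ZMod 2) := eval₂RingHom f DualNumber.eps
  have h2 : (φ 2 : DualNumber (ZMod 2)) = 0 := by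
    rw [map_ofNat]; ext <;> decide
  have hgen1 : φ (X ^ 2 + 2) = 0 := by
    have : φ (X ^ 2 + 2) = φ X ^ 2 + φ 2 := by push_cast [map_add, map_pow]; ring
    rw [this, h2, show φ X = DualNumber.eps from eval₂_X _ _, sq, DualNumber.eps_mul_eps,
      zero_add]
  have hgen2 : φ (2 * X) = 0 := by rw [map_mul, h2, zero_mul]
  have hker : I ≤ RingHom.ker φ := by
    rw [hI, Ideal.span_le]
    intro p hp
    simp only [Set.mem_insert_iff, Set.mem_singleton_iff] at hp
    rcases hp with rfl | rfl
    · exact hgen1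
    · exact hgen2
  let ψ : (ZMod 4)[X] ⧸ I →+* DualNumber (ZMod 2) :=
    Ideal.Quotient.lift I φ (fun a ha => hker ha)
  have hsmul : ∀ p : (ZMod 4)[X],
      (2 : ZMod 4) • Ideal.Quotient.mk I p = Ideal.Quotient.mk I (2 * p) := by
    intro p
    show Ideal.Quotient.mkₐ (ZMod 4) I ((2 : ZMod 4) • p) = Ideal.Quotient.mk I (2 * p)
    rw [smul_eq_C_mul]
    norm_num [Ideal.Quotient.mkₐ_eq_mk, map_ofNat]
  set m : (ZMod 4)[X] ⧸ I := Ideal.Quotient.mk I X with hm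
  have h2m : (2 : ZMod 4) • m = 0 := by
    rw [hm, hsmul, Ideal.Quotient.eq_zero_iff_mem]
    exact Ideal.subset_span (by simp)
  obtain ⟨m', hm'⟩ := free_two_smul_aux m h2m
  obtain ⟨p, rfl⟩ := Ideal.Quotient.mk_surjective m'
  rw [hsmul] at hm'
  have heps : DualNumber.eps = ψ m := (eval₂_X _ _).symm
  rw [hm', show ψ (Ideal.Quotient.mk I (2 * p)) = φ (2 * p) from rfl, map_mul, h2,
    zero_mul] at heps
  simpa using congrArg TrivSqZeroExt.snd heps
end

section
/- Let R = ℤ₄[x]/⟨x²+2, 2x⟩ and 𝓡 = R[X]/⟨X³−1⟩. The element ε₀(X) = 3X² + 3X + 3 is an idempotent in 𝓡, the element ε₁(X) = X² + X + 2 is an idempotent in 𝓡, ε₀(X)·ε₁(X) = 0, and ε₀(X) + ε₁(X) = 1 in 𝓡. -/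
/-!
Only two facts about the coefficient ring matter: `4 = 0` in `R`, and `X³ = 1` in the quotient.
With `e = X² + X + 1` one has `e² = 3e + (X + 2)(X³ - 1)`, so `ε₀ ε₁ = 3e(e + 1) = 12e = 0` and
`ε₀ + ε₁ = 4e + 1 = 1`; two orthogonal elements summing to `1` are idempotent.
-/

open Polynomial

instance (I : Ideal (ZMod 4)[X]) (J : Ideal ((ZMod 4)[X] ⧸ I)[X]) : J.IsTwoSided :=
  ⟨fun b ha ↦ mul_comm b _ ▸ J.smul_mem b ha⟩

theorem natCast_eq_zero_of_zmod_algebra {S : Type*} [Ring S] (n : ℕ) [Algebra (ZMod n) S] :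
    (n : S) = 0 := by
  rw [← map_natCast (algebraMap (ZMod n) S), ZMod.natCast_self, map_zero]

theorem mk_X_pow_eq_one {A : Type*} [CommRing A] (n : ℕ) :
    Ideal.Quotient.mk (Ideal.span {(X ^ n - 1 : A[X])}) X ^ n = 1 := by
  rw [← map_pow, ← map_one (Ideal.Quotient.mk _), Ideal.Quotient.eq]
  exact Ideal.subset_span rfl

theorem complementary_idempotents_of_four_eq_zero_of_pow_three_eq_one {S : Type*} [CommRing S]
    {x : S} (h4 : (4 : S) = 0) (hx : x ^ 3 = 1) :
    let ε₀ := 3 * x ^ 2 + 3 * x + 3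
    let ε₁ := x ^ 2 + x + 2
    ε₀ * ε₀ = ε₀ ∧ ε₁ * ε₁ = ε₁ ∧ ε₀ * ε₁ = 0 ∧ ε₀ + ε₁ = 1 := by
  intro ε₀ ε₁
  have hmul : ε₀ * ε₁ = 0 := by linear_combination 3 * (x + 2) * hx + 3 * (x ^ 2 + x + 1) * h4
  have hadd : ε₀ + ε₁ = 1 := by linear_combination (x ^ 2 + x + 1) * h4
  obtain ⟨h₀, h₁⟩ := IsIdempotentElem.of_mul_add hmul hadd
  exact ⟨h₀, h₁, hmul, hadd⟩

theorem idempotents_in_RX_mod_X3_sub_1 :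
    letI R := (ZMod 4)[X] ⧸ Ideal.span {(X ^ 2 + 2 : (ZMod 4)[X]), (2 * X : (ZMod 4)[X])}
    letI π := Ideal.Quotient.mk (Ideal.span {(X ^ 3 - 1 : R[X])})
    letI ε₀ := π (3 * X ^ 2 + 3 * X + 3)
    letI ε₁ := π (X ^ 2 + X + 2)
    ε₀ * ε₀ = ε₀ ∧ ε₁ * ε₁ = ε₁ ∧ ε₀ * ε₁ = 0 ∧ ε₀ + ε₁ = 1 := by
  simp only [map_add, map_mul, map_pow, map_ofNat]
  exact complementary_idempotents_of_four_eq_zero_of_pow_three_eq_one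
    (by exact_mod_cast natCast_eq_zero_of_zmod_algebra 4) (mk_X_pow_eq_one 3)
end
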